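/- Let p be a prime, G a group, and M a Z_p[G]-module that is finitely generated over Z_p[G]. Suppose M/pM, as a module over F_p[G], satisfies Ext^i_{F_p[G]}(M/pM, F_p[G]) = 0 for i = 0, 1. Then Hom_{Z_p[G]}(M, Z_p[G]) = 0. -/

import Mathlib

open CategoryTheory

/-- The `i`-th Ext group `Ext^i_Λ(M, N)` of `Λ`-modules, as an abelian group. -/
noncomputable abbrev extGrp (Λ : Type) [Ring Λ] (M N : Type) [AddCommGroup M] [Module Λ M]
    [AddCommGroup N] [Module Λ N] (i : ℕ) : Type :=
  ((Ext ℤ (ModuleCat Λ) i).obj (Opposite.op (ModuleCat.of Λ M))).obj (ModuleCat.of Λ N)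

/-- The coefficient-reduction ring homomorphism `ℤ_p[G] → 𝔽_p[G]`. -/
noncomputable def redHom (p : ℕ) [Fact p.Prime] (G : Type) [Group G] :
    MonoidAlgebra ℤ_[p] G →+* MonoidAlgebra (ZMod p) G :=
  MonoidAlgebra.liftNCRingHom
    ((MonoidAlgebra.singleOneRingHom).comp (PadicInt.toZMod))
    (MonoidAlgebra.of (ZMod p) G)
    (fun x y => by
      show Commute (MonoidAlgebra.single 1 (PadicInt.toZMod x)) (MonoidAlgebra.single y 1)
      unfold Commute SemiconjBy
      rw [MonoidAlgebra.single_mul_single, MonoidAlgebra.single_mul_single,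
        one_mul, mul_one, one_mul, mul_one])

/-! Reduce `f : M → ℤ_p[G]` modulo `p`: the result kills `pM`, so it factors through a
`𝔽_p[G]`-linear map `M/pM → 𝔽_p[G]`, which vanishes because `Ext⁰ = Hom`. Hence every value of `f`
is divisible by `p`, and since `p` is a non-zero-divisor on `ℤ_p[G]` the quotient is again a
linear map, `f = p • g`. Iterating, the coefficients of `f m` lie in `⋂ pⁿ ℤ_p = 0`. -/

open Limits in
noncomputable def extZeroIso {R : Type*} [Ring R] {C : Type*} [Category C] [Abelian C]
    [Linear R C] [EnoughProjectives C] (X Y : C) :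
    ((Ext R C 0).obj (Opposite.op X)).obj Y ≅ ModuleCat.of R (X ⟶ Y) :=
  have : PreservesLimits ((linearYoneda R C).obj Y ⋙ forget _) :=
    (inferInstance : PreservesLimits (yoneda.obj Y))
  have : PreservesLimits ((linearYoneda R C).obj Y) :=
    preservesLimits_of_reflects_of_preserves _ (forget _)
  have : PreservesFiniteColimits ((linearYoneda R C).obj Y).rightOp :=
    preservesFiniteColimits_rightOp _
  (((linearYoneda R C).obj Y).rightOp.leftDerivedZeroIsoSelf.app X).unop.symm

theorem subsingleton_linearMap_of_subsingleton_extGrp_zero {Λ : Type} [Ring Λ] {A B : Type}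
    [AddCommGroup A] [Module Λ A] [AddCommGroup B] [Module Λ B]
    (h : Subsingleton (extGrp Λ A B 0)) : Subsingleton (A →ₗ[Λ] B) :=
  have : Subsingleton (ModuleCat.of Λ A ⟶ ModuleCat.of Λ B) :=
    ((forget _).mapIso (extZeroIso (R := ℤ) _ _)).toEquiv.symm.subsingleton
  (ModuleCat.homEquiv (M := .of Λ A) (N := .of Λ B)).symm.subsingleton

theorem LinearMap.exists_comp_eq_of_ker_le {Λ Λ' M N Q : Type*} [Ring Λ] [Ring Λ']
    [AddCommGroup M] [Module Λ M] [AddCommGroup N] [Module Λ' N] [AddCommGroup Q] [Module Λ' Q]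
    {σ : Λ →+* Λ'} (hσ : Function.Surjective σ) (π : M →ₛₗ[σ] N) (hπ : Function.Surjective π)
    (g : M →ₛₗ[σ] Q) (h : ker π ≤ ker g) :
    ∃ φ : N →ₗ[Λ'] Q, ∀ m, φ (π m) = g m := by
  let φ₀ : N →+ Q := π.toAddMonoidHom.liftOfRightInverse _ (Function.rightInverse_surjInv hπ)
    ⟨g.toAddMonoidHom, h⟩
  have hφ₀ (m : M) : φ₀ (π m) = g m := AddMonoidHom.liftOfRightInverse_comp_apply _ _ _ _ m
  refine ⟨{ φ₀ with map_smul' := fun c x => ?_ }, hφ₀⟩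
  obtain ⟨a, rfl⟩ := hσ c
  obtain ⟨m, rfl⟩ := hπ x
  simp only [AddMonoidHom.toFun_eq_coe, RingHom.id_apply, ← map_smulₛₗ, hφ₀]

theorem LinearMap.exists_forall_eq_smul_of_isSMulRegular {S A M P : Type*} [Semiring A]
    [AddCommMonoid M] [Module A M] [AddCommMonoid P] [Module A P] [Monoid S]
    [DistribMulAction S P] [SMulCommClass S A P] {s : S} (hs : IsSMulRegular P s) (f : M →ₗ[A] P)
    (hf : ∀ m, ∃ y, f m = s • y) : ∃ g : M →ₗ[A] P, ∀ m, f m = s • g m := by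
  let μ := DistribSMul.toLinearMap A P s
  have hfμ (m : M) : f m ∈ LinearMap.range μ := let ⟨y, hy⟩ := hf m; ⟨y, hy.symm⟩
  refine ⟨(LinearEquiv.ofInjective μ hs).symm ∘ₗ f.codRestrict _ hfμ, fun m => ?_⟩
  exact (LinearEquiv.ofInjective_symm_apply (f := μ) (h := hs) ⟨f m, hfμ m⟩).symm

theorem LinearMap.eq_zero_of_forall_exists_eq_smul {S A M P : Type*} [Semiring A]
    [AddCommMonoid M] [Module A M] [AddCommMonoid P] [Module A P] [Monoid S]
    [DistribMulAction S P] {s : S} (hP : ∀ x : P, (∀ n, ∃ y, x = s ^ n • y) → x = 0)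
    (hdiv : ∀ f : M →ₗ[A] P, ∃ g : M →ₗ[A] P, ∀ m, f m = s • g m) (f : M →ₗ[A] P) : f = 0 := by
  have hpow (n : ℕ) : ∀ f : M →ₗ[A] P, ∃ g : M →ₗ[A] P, ∀ m, f m = s ^ n • g m := by
    induction n with
    | zero => exact fun f => ⟨f, fun m => by rw [pow_zero, one_smul]⟩
    | succ n ih =>
      intro f
      obtain ⟨g, hg⟩ := ih f
      obtain ⟨g', hg'⟩ := hdiv g
      exact ⟨g', fun m => by rw [hg, hg', pow_succ, mul_smul]⟩
  ext m
  exact hP _ fun n => let ⟨g, hg⟩ := hpow n f; ⟨g m, hg m⟩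

theorem LinearMap.exists_forall_eq_smul_of_subsingleton_dual {R Λ Λ' M N : Type*} [CommRing R]
    [Ring Λ] [Algebra R Λ] [Ring Λ'] [AddCommGroup M] [Module Λ M] [AddCommGroup N]
    [Module Λ' N] [Subsingleton (N →ₗ[Λ'] Λ')] {σ : Λ →+* Λ'} (hσ : Function.Surjective σ)
    {a : R} (hσa : ∀ x, σ x = 0 ↔ ∃ y, x = a • y) (ha : IsSMulRegular Λ a) (π : M →ₛₗ[σ] N)
    (hπ : Function.Surjective π) (hker : ∀ m, π m = 0 → ∃ m', m = algebraMap R Λ a • m')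
    (f : M →ₗ[Λ] Λ) : ∃ g : M →ₗ[Λ] Λ, ∀ m, f m = a • g m := by
  obtain ⟨φ, hφ⟩ := exists_comp_eq_of_ker_le hσ π hπ (σ.toSemilinearMap.comp f) fun m hm => by
    obtain ⟨m', rfl⟩ := hker m hm
    simp only [mem_ker, comp_apply, map_smul, smul_eq_mul, ← Algebra.smul_def]
    exact (hσa _).mpr ⟨_, rfl⟩
  have hred (m : M) : σ (f m) = 0 := by
    simpa [Subsingleton.elim φ 0] using (hφ m).symm
  exact exists_forall_eq_smul_of_isSMulRegular ha f fun m => (hσa _).mp (hred m)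

namespace MonoidAlgebra

variable {R M : Type*} [CommSemiring R]

theorem exists_eq_smul_of_forall_dvd {a : R} {x : R[M]} (h : ∀ m, a ∣ x.coeff m) :
    ∃ y, x = a • y := by
  have hx : x ∈ LinearMap.range (a • LinearMap.id : R[M] →ₗ[R] R[M]) := by
    rw [← sum_coeff_single x]
    refine Submodule.finsuppSum_mem _ _ _ _ fun m _ => ?_
    obtain ⟨c, hc⟩ := h m
    exact ⟨single m c, by simp [hc, smul_single]⟩
  obtain ⟨y, hy⟩ := hx
  exact ⟨y, hy.symm⟩

theorem eq_zero_of_forall_exists_eq_pow_smul {a : R} (ha : ∀ r : R, (∀ n, a ^ n ∣ r) → r = 0)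
    {x : R[M]} (h : ∀ n, ∃ y, x = a ^ n • y) : x = 0 := by
  ext m
  refine ha _ fun n => ?_
  obtain ⟨y, rfl⟩ := h n
  exact Dvd.intro _ rfl

end MonoidAlgebra

theorem PadicInt.eq_zero_of_forall_pow_dvd {p : ℕ} [Fact p.Prime] {x : ℤ_[p]}
    (h : ∀ n, (p : ℤ_[p]) ^ n ∣ x) : x = 0 := by
  by_contra hx
  have := (mem_span_pow_iff_le_valuation x hx (x.valuation + 1)).mp
    (Ideal.mem_span_singleton.mpr (h _))
  omega

section redHom

variable {p : ℕ} [Fact p.Prime] {G : Type} [Group G]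

theorem redHom_eq_mapRingHom : redHom p G = MonoidAlgebra.mapRingHom G PadicInt.toZMod := by
  refine MonoidAlgebra.ringHom_ext (fun c => ?_) (fun g => ?_) <;>
    simp [redHom, MonoidAlgebra.liftNCRingHom_single]

theorem redHom_surjective : Function.Surjective (redHom p G) := by
  rw [redHom_eq_mapRingHom]
  exact MonoidAlgebra.map_surjective _ (ZMod.ringHom_surjective _)

theorem redHom_eq_zero_iff {x : MonoidAlgebra ℤ_[p] G} :
    redHom p G x = 0 ↔ ∃ y, x = (p : ℤ_[p]) • y := by
  have hker (c : ℤ_[p]) : PadicInt.toZMod c = 0 ↔ (p : ℤ_[p]) ∣ c := by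
    rw [← RingHom.mem_ker, PadicInt.ker_toZMod, PadicInt.maximalIdeal_eq_span_p,
      Ideal.mem_span_singleton]
  simp only [redHom_eq_mapRingHom, ← MonoidAlgebra.coeff_eq_zero, Finsupp.ext_iff,
    MonoidAlgebra.coeff_mapRingHom, Finsupp.coe_zero, Pi.zero_apply, hker]
  refine ⟨MonoidAlgebra.exists_eq_smul_of_forall_dvd, ?_⟩
  rintro ⟨y, rfl⟩ γ
  exact Dvd.intro _ rfl

end redHom

theorem hom_vanish_of_mod_p_pseudoNull_general (p : ℕ) [Fact p.Prime] (G : Type) [Group G]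
    (M : Type) [AddCommGroup M] [Module (MonoidAlgebra ℤ_[p] G) M]
    (N : Type) [AddCommGroup N] [Module (MonoidAlgebra (ZMod p) G) N]
    (π : M →+ N) (hπ : Function.Surjective π)
    (hker : ∀ m : M, π m = 0 ↔
      ∃ m' : M, m = (algebraMap ℤ_[p] (MonoidAlgebra ℤ_[p] G) (p : ℤ_[p])) • m')
    (hcompat : ∀ (a : MonoidAlgebra ℤ_[p] G) (m : M), π (a • m) = redHom p G a • π m)
    (hvanish : ∀ i : ℕ, i ≤ 1 →
      Subsingleton (extGrp (MonoidAlgebra (ZMod p) G) N (MonoidAlgebra (ZMod p) G) i)) :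
    Subsingleton (M →ₗ[MonoidAlgebra ℤ_[p] G] MonoidAlgebra ℤ_[p] G) := by
  have := subsingleton_linearMap_of_subsingleton_extGrp_zero (hvanish 0 zero_le_one)
  have hp : IsSMulRegular (MonoidAlgebra ℤ_[p] G) (p : ℤ_[p]) :=
    .of_ne_zero (Nat.cast_ne_zero.mpr (Fact.out : p.Prime).ne_zero)
  let π' : M →ₛₗ[redHom p G] N := { π with map_smul' := hcompat }
  refine subsingleton_of_forall_eq 0 (LinearMap.eq_zero_of_forall_exists_eq_smul
    (fun _ => MonoidAlgebra.eq_zero_of_forall_exists_eq_pow_smul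
      fun _ => PadicInt.eq_zero_of_forall_pow_dvd) ?_)
  exact LinearMap.exists_forall_eq_smul_of_subsingleton_dual redHom_surjective
    (fun _ => redHom_eq_zero_iff) hp π' hπ fun m => (hker m).mp

/-- Let `p` be a prime, `G` a group, and `M` a `ℤ_p[G]`-module that is finitely
generated over `ℤ_p[G]`.  Suppose `M/pM` (realized as an `𝔽_p[G]`-module `N` together with a
surjection `π : M → N` with kernel `pM`, compatible with the ring homomorphism
`ℤ_p[G] → 𝔽_p[G]`) satisfies `Ext^i_{𝔽_p[G]}(M/pM, 𝔽_p[G]) = 0` for `i = 0, 1`.  Then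
`Hom_{ℤ_p[G]}(M, ℤ_p[G]) = 0`. -/
theorem hom_vanish_of_mod_p_pseudoNull (p : ℕ) [Fact p.Prime] (G : Type) [Group G]
    (M : Type) [AddCommGroup M] [Module (MonoidAlgebra ℤ_[p] G) M]
    [Module.Finite (MonoidAlgebra ℤ_[p] G) M]
    (N : Type) [AddCommGroup N] [Module (MonoidAlgebra (ZMod p) G) N]
    (π : M →+ N) (hπ : Function.Surjective π)
    (hker : ∀ m : M, π m = 0 ↔
      ∃ m' : M, m = (algebraMap ℤ_[p] (MonoidAlgebra ℤ_[p] G) (p : ℤ_[p])) • m')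
    (hcompat : ∀ (a : MonoidAlgebra ℤ_[p] G) (m : M), π (a • m) = redHom p G a • π m)
    (hvanish : ∀ i : ℕ, i ≤ 1 →
      Subsingleton (extGrp (MonoidAlgebra (ZMod p) G) N (MonoidAlgebra (ZMod p) G) i)) :
    Subsingleton (M →ₗ[MonoidAlgebra ℤ_[p] G] MonoidAlgebra ℤ_[p] G) :=
  hom_vanish_of_mod_p_pseudoNull_general p G M N π hπ hker hcompat hvanish
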